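/- In LP (values T, B, F, with T and B designated), the set of formulas built from ∧, ∨, ¬ that take a designated value under every LP valuation is exactly the set of classical two-valued tautologies in ∧, ∨, ¬. -/

import Mathlib

/-- Truth values of LP: T, B (both), F. T and B are designated. -/
inductive LP : Type | T | B | F
deriving DecidableEq

namespace LP

/-- Negation: swaps T and F, fixes B. -/
def neg : LP → LP | T => F | F => T | B => B

/-- Conjunction: meet w.r.t. F < B < T. -/
def and : LP → LP → LP
  | T, y => y | x, T => x
  | F, _ => F | _, F => F
  | B, B => B

/-- Disjunction: join w.r.t. F < B < T. -/
def or : LP → LP → LP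
  | F, y => y | x, F => x
  | T, _ => T | _, T => T
  | B, B => B

/-- Designated values of LP are T and B. -/
def designated (x : LP) : Prop := x = T ∨ x = B

end LP

/-- Propositional formulas built from ∧, ∨, ¬. -/
inductive Fml : Type
  | var : Nat → Fml
  | and : Fml → Fml → Fml
  | or : Fml → Fml → Fml
  | neg : Fml → Fml

/-- Evaluation of a formula under an LP valuation. -/
def evalLP (v : Nat → LP) : Fml → LP
  | .var n => v n
  | .and φ ψ => LP.and (evalLP v φ) (evalLP v ψ)
  | .or φ ψ => LP.or (evalLP v φ) (evalLP v ψ)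
  | .neg φ => LP.neg (evalLP v φ)

/-- Classical two-valued evaluation (the restriction of the LP tables to {T, F}). -/
def evalBool (v : Nat → Bool) : Fml → Bool
  | .var n => v n
  | .and φ ψ => evalBool v φ && evalBool v ψ
  | .or φ ψ => evalBool v φ || evalBool v ψ
  | .neg φ => ! evalBool v φ

/-! The two-element Boolean algebra sits inside LP as {F, T}, and the LP tables restrict to the
classical ones there, so an LP-valid formula is a tautology. Conversely, call an LP value `x` a
cover of a Boolean `b` when `x` is `b` itself or `B`; the connectives preserve covers, so a
classical valuation covered by an LP valuation `v` evaluates `φ` to a value covered by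
`evalLP v φ`. If `evalLP v φ = F`, that value is `false`, and `φ` is no tautology. -/

namespace LP

def ofBool : Bool → LP
  | true => T
  | false => F

@[simp] lemma and_ofBool (a b : Bool) : LP.and (ofBool a) (ofBool b) = ofBool (a && b) := by
  cases a <;> cases b <;> rfl

@[simp] lemma or_ofBool (a b : Bool) : LP.or (ofBool a) (ofBool b) = ofBool (a || b) := by
  cases a <;> cases b <;> rfl

@[simp] lemma neg_ofBool (a : Bool) : LP.neg (ofBool a) = ofBool (!a) := by
  cases a <;> rfl

lemma designated_ofBool_iff (b : Bool) : designated (ofBool b) ↔ b = true := by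
  cases b <;> simp [designated, ofBool]

lemma designated_of_ne_F {x : LP} (hx : x ≠ F) : x.designated := by
  cases x <;> simp_all [designated]

def Covers (x : LP) (b : Bool) : Prop := x = ofBool b ∨ x = B

lemma exists_covers (x : LP) : ∃ b, x.Covers b := by
  cases x
  exacts [⟨true, .inl rfl⟩, ⟨true, .inr rfl⟩, ⟨false, .inl rfl⟩]

lemma eq_false_of_covers_F {b : Bool} (h : F.Covers b) : b = false := by
  cases b <;> simp_all [Covers, ofBool]

lemma Covers.and {x y : LP} {a b : Bool} (hx : x.Covers a) (hy : y.Covers b) :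
    (LP.and x y).Covers (a && b) := by
  rcases hx with rfl | rfl <;> rcases hy with rfl | rfl <;> cases a <;> cases b <;>
    simp [Covers, LP.and, ofBool]

lemma Covers.or {x y : LP} {a b : Bool} (hx : x.Covers a) (hy : y.Covers b) :
    (LP.or x y).Covers (a || b) := by
  rcases hx with rfl | rfl <;> rcases hy with rfl | rfl <;> cases a <;> cases b <;>
    simp [Covers, LP.or, ofBool]

lemma Covers.neg {x : LP} {a : Bool} (hx : x.Covers a) : (LP.neg x).Covers (!a) := by
  rcases hx with rfl | rfl <;> cases a <;> simp [Covers, LP.neg, ofBool]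

end LP

lemma evalLP_ofBool_comp (w : Nat → Bool) (φ : Fml) :
    evalLP (LP.ofBool ∘ w) φ = LP.ofBool (evalBool w φ) := by
  induction φ with
  | var n => rfl
  | and φ ψ ihφ ihψ => simp [evalLP, evalBool, ihφ, ihψ]
  | or φ ψ ihφ ihψ => simp [evalLP, evalBool, ihφ, ihψ]
  | neg φ ih => simp [evalLP, evalBool, ih]

lemma evalLP_covers_evalBool {v : Nat → LP} {w : Nat → Bool} (hvw : ∀ n, (v n).Covers (w n))
    (φ : Fml) : (evalLP v φ).Covers (evalBool w φ) := by
  induction φ with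
  | var n => exact hvw n
  | and φ ψ ihφ ihψ => exact ihφ.and ihψ
  | or φ ψ ihφ ihψ => exact ihφ.or ihψ
  | neg φ ih => exact ih.neg

/-- The LP-valid formulas are exactly the classical tautologies. -/
theorem lp_valid_iff_classical_tautology :
    {φ : Fml | ∀ v : Nat → LP, LP.designated (evalLP v φ)} =
      {φ : Fml | ∀ v : Nat → Bool, evalBool v φ = true} := by
  ext φ
  constructor
  · intro hvalid w
    rw [← LP.designated_ofBool_iff, ← evalLP_ofBool_comp]
    exact hvalid _
  · intro htaut v
    choose w hvw using fun n => (v n).exists_covers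
    refine LP.designated_of_ne_F fun hF => ?_
    have hcov := evalLP_covers_evalBool hvw φ
    rw [hF] at hcov
    exact Bool.false_ne_true (LP.eq_false_of_covers_F hcov ▸ htaut w)
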